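/- arXiv:2101.07838 — 2 statements merged into one kernel-verified Lean document; each statement's English description precedes it below -/
import Mathlib

section
/- Let G be a finite group and let H and K be CD-subgroups of G. Then the subgroup generated by H and K equals the set product HK, and this subgroup ⟨H,K⟩ = HK is a CD-subgroup of G. -/
open Pointwise

/-- The Chermak–Delgado index-measure of a subgroup `H` of `G`:
`m(G,H) = |G:H| * |G:C_G(H)|`. -/
noncomputable def cdMeasure {G : Type*} [Group G] (H : Subgroup G) : ℕ :=
  H.index * (Subgroup.centralizer (H : Set G)).index

/-- `μ(G)`, the minimum of `m(G,H)` over all subgroups `H ≤ G`. -/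
noncomputable def cdMu (G : Type*) [Group G] : ℕ :=
  sInf {n : ℕ | ∃ H : Subgroup G, cdMeasure H = n}

/-- A subgroup `H ≤ G` is a CD-subgroup if `m(G,H) = μ(G)`. -/
def IsCDSubgroup {G : Type*} [Group G] (H : Subgroup G) : Prop :=
  cdMeasure H = cdMu G

/-!
Write `f(L) = |L| |C_G(L)|`. Since `m(G,L) f(L) = |G|²`, the CD-subgroups are exactly the
maximisers of `f`. The product formula `|HK| |H ∩ K| = |H| |K|`, applied to `H, K` and to
`C_G(H), C_G(K)`, together with `C_G(⟨H,K⟩) = C_G(H) ∩ C_G(K)`, `HK ⊆ ⟨H,K⟩` and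
`C_G(H) C_G(K) ⊆ C_G(H ∩ K)`, gives `f(H) f(K) ≤ f(⟨H,K⟩) f(H ∩ K)`, with equality only if
`HK = ⟨H,K⟩`. For maximisers `H, K` the right side is at most `f(H) f(K)`, so equality holds
and `f(⟨H,K⟩) = f(H)`.
-/

namespace Subgroup

variable {G : Type*} [Group G]

theorem card_mul_mul_card_inf (H K : Subgroup G) :
    Nat.card ((H : Set G) * K : Set G) * Nat.card (H ⊓ K : Subgroup G)
      = Nat.card H * Nat.card K := by
  -- orbit–stabilizer for `(h, k) • g = h g k⁻¹`, at the point `1`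
  let _ : MulAction (H × K) G :=
    { smul := fun p g => (p.1 : G) * g * (p.2 : G)⁻¹
      one_smul := fun g => by simp [HSMul.hSMul]
      mul_smul := fun p q g => by simp [HSMul.hSMul, mul_assoc] }
  have smul_def (p : H × K) (g : G) : p • g = (p.1 : G) * g * (p.2 : G)⁻¹ := rfl
  have orbit_one : MulAction.orbit (H × K) (1 : G) = (H : Set G) * K := by
    ext x
    constructor
    · rintro ⟨p, rfl⟩
      exact ⟨p.1, p.1.2, (p.2 : G)⁻¹, K.inv_mem p.2.2, by simp [smul_def]⟩
    · rintro ⟨h, hh, k, hk, rfl⟩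
      exact ⟨(⟨h, hh⟩, ⟨k⁻¹, K.inv_mem hk⟩), by simp [smul_def]⟩
  have mem_stabilizer (p : H × K) :
      p ∈ MulAction.stabilizer (H × K) (1 : G) ↔ (p.1 : G) = p.2 := by
    rw [MulAction.mem_stabilizer_iff, smul_def, mul_one, mul_inv_eq_one]
  have stabilizer_one :
      MulAction.stabilizer (H × K) (1 : G) ≃ (H ⊓ K : Subgroup G) :=
    { toFun := fun p => ⟨p.1.1, p.1.1.2, (mem_stabilizer p).mp p.2 ▸ p.1.2.2⟩
      invFun := fun d => ⟨(⟨d, d.2.1⟩, ⟨d, d.2.2⟩), (mem_stabilizer _).mpr rfl⟩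
      left_inv := fun p => Subtype.ext (Prod.ext rfl (Subtype.ext ((mem_stabilizer p).mp p.2)))
      right_inv := fun _ => rfl }
  rw [← orbit_one, ← Nat.card_congr stabilizer_one, ← Nat.card_prod, ← Nat.card_prod]
  exact Nat.card_congr (MulAction.orbitProdStabilizerEquivGroup (H × K) 1)

theorem centralizer_sup (H K : Subgroup G) :
    centralizer ((H ⊔ K : Subgroup G) : Set G) = centralizer H ⊓ centralizer K := by
  rw [sup_eq_closure, centralizer_closure]
  ext g
  simp only [mem_centralizer_iff, mem_inf, Set.mem_union, SetLike.mem_coe, or_imp, forall_and]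

theorem mul_subset_sup (H K : Subgroup G) : (H : Set G) * K ⊆ (H ⊔ K : Subgroup G) := by
  rintro _ ⟨h, hh, k, hk, rfl⟩
  exact mul_mem_sup hh hk

theorem centralizer_mul_centralizer_subset_centralizer_inf (H K : Subgroup G) :
    (centralizer (H : Set G) : Set G) * centralizer (K : Set G)
      ⊆ centralizer ((H ⊓ K : Subgroup G) : Set G) := by
  rintro _ ⟨x, hx, y, hy, rfl⟩
  exact mul_mem (centralizer_le (SetLike.coe_subset_coe.mpr inf_le_left) hx)
    (centralizer_le (SetLike.coe_subset_coe.mpr inf_le_right) hy)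

end Subgroup

section

open Subgroup

variable {G : Type*} [Group G]

/-- The Chermak–Delgado measure `|L| |C_G(L)|` in its usual multiplicative form. -/
noncomputable def cdCard (L : Subgroup G) : ℕ :=
  Nat.card L * Nat.card (centralizer (L : Set G))

theorem cdCard_pos [Finite G] (L : Subgroup G) : 0 < cdCard L :=
  Nat.mul_pos Nat.card_pos Nat.card_pos

theorem cdMeasure_mul_cdCard [Finite G] (L : Subgroup G) :
    cdMeasure L * cdCard L = Nat.card G * Nat.card G := by
  rw [cdMeasure, cdCard, mul_mul_mul_comm, index_mul_card, index_mul_card]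

theorem cdMeasure_le_cdMeasure_iff [Finite G] {H L : Subgroup G} :
    cdMeasure H ≤ cdMeasure L ↔ cdCard L ≤ cdCard H := by
  have hH : 0 < cdMeasure H := Nat.pos_of_mul_pos_right
    ((cdMeasure_mul_cdCard H).symm ▸ Nat.mul_pos Nat.card_pos Nat.card_pos)
  rw [← Nat.mul_le_mul_right_iff (cdCard_pos L), cdMeasure_mul_cdCard,
    ← cdMeasure_mul_cdCard H, Nat.mul_le_mul_left_iff hH]

theorem isCDSubgroup_iff_forall_cdMeasure_le {H : Subgroup G} :
    IsCDSubgroup H ↔ ∀ L : Subgroup G, cdMeasure H ≤ cdMeasure L := by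
  refine ⟨fun hH L => hH ▸ Nat.sInf_le ⟨L, rfl⟩, fun h => ?_⟩
  refine le_antisymm ?_ (Nat.sInf_le ⟨H, rfl⟩)
  exact le_csInf ⟨_, H, rfl⟩ (by rintro _ ⟨L, rfl⟩; exact h L)

theorem isCDSubgroup_iff_forall_cdCard_le [Finite G] {H : Subgroup G} :
    IsCDSubgroup H ↔ ∀ L : Subgroup G, cdCard L ≤ cdCard H := by
  simp only [isCDSubgroup_iff_forall_cdMeasure_le, cdMeasure_le_cdMeasure_iff]

theorem cdCard_mul_cdCard_le_card_mul [Finite G] (H K : Subgroup G) :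
    cdCard H * cdCard K
      ≤ Nat.card ((H : Set G) * K : Set G) * (Nat.card (H ⊓ K : Subgroup G)
        * (Nat.card (centralizer ((H ⊓ K : Subgroup G) : Set G))
          * Nat.card (centralizer ((H ⊔ K : Subgroup G) : Set G)))) := by
  have hC := Nat.card_mono (Set.toFinite _)
    (centralizer_mul_centralizer_subset_centralizer_inf H K)
  rw [SetLike.coe_sort_coe] at hC
  calc cdCard H * cdCard K
      = Nat.card ((H : Set G) * K : Set G) * (Nat.card (H ⊓ K : Subgroup G)
        * (Nat.card ((centralizer (H : Set G) : Set G) * centralizer (K : Set G) : Set G)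
          * Nat.card (centralizer ((H ⊔ K : Subgroup G) : Set G)))) := by
        rw [cdCard, cdCard, mul_mul_mul_comm, ← card_mul_mul_card_inf, ← card_mul_mul_card_inf,
          ← centralizer_sup]
        ring
    _ ≤ _ := by gcongr

theorem cdCard_sup_mul_cdCard_inf (H K : Subgroup G) :
    cdCard (H ⊔ K) * cdCard (H ⊓ K)
      = Nat.card (H ⊔ K : Subgroup G) * (Nat.card (H ⊓ K : Subgroup G)
        * (Nat.card (centralizer ((H ⊓ K : Subgroup G) : Set G))
          * Nat.card (centralizer ((H ⊔ K : Subgroup G) : Set G)))) := by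
  rw [cdCard, cdCard]
  ring

theorem cdCard_mul_cdCard_le [Finite G] (H K : Subgroup G) :
    cdCard H * cdCard K ≤ cdCard (H ⊔ K) * cdCard (H ⊓ K) := by
  have hHK := Nat.card_mono (Set.toFinite _) (mul_subset_sup H K)
  rw [SetLike.coe_sort_coe] at hHK
  rw [cdCard_sup_mul_cdCard_inf]
  exact (cdCard_mul_cdCard_le_card_mul H K).trans (by gcongr)

theorem coe_sup_eq_mul_of_cdCard_mul_cdCard_le [Finite G] {H K : Subgroup G}
    (h : cdCard (H ⊔ K) * cdCard (H ⊓ K) ≤ cdCard H * cdCard K) :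
    ((H ⊔ K : Subgroup G) : Set G) = (H : Set G) * K := by
  refine (Set.eq_of_subset_of_ncard_le (mul_subset_sup H K) ?_).symm
  rw [← Nat.card_coe_set_eq, ← Nat.card_coe_set_eq, SetLike.coe_sort_coe]
  rw [cdCard_sup_mul_cdCard_inf] at h
  exact Nat.le_of_mul_le_mul_right (h.trans (cdCard_mul_cdCard_le_card_mul H K))
    (Nat.mul_pos Nat.card_pos (Nat.mul_pos Nat.card_pos Nat.card_pos))

end

theorem stmt_3 {G : Type*} [Group G] [Finite G] (H K : Subgroup G)
    (hH : IsCDSubgroup H) (hK : IsCDSubgroup K) :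
    ((H ⊔ K : Subgroup G) : Set G) = (H : Set G) * (K : Set G) ∧
      IsCDSubgroup (H ⊔ K) := by
  rw [isCDSubgroup_iff_forall_cdCard_le] at hH hK ⊢
  have hle : cdCard (H ⊔ K) * cdCard (H ⊓ K) ≤ cdCard H * cdCard K :=
    Nat.mul_le_mul (hH _) (hK _)
  refine ⟨coe_sup_eq_mul_of_cdCard_mul_cdCard_le hle, fun L => ?_⟩
  suffices cdCard (H ⊔ K) = cdCard H from this ▸ hH L
  by_contra hne
  have hlt := Nat.mul_lt_mul_of_lt_of_le (lt_of_le_of_ne (hH _) hne) (hK (H ⊓ K)) (cdCard_pos K)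
  exact (cdCard_mul_cdCard_le H K).not_gt hlt
end

section
/- Let p be a prime and let G be a non-abelian finite p-group. Then μ(G) = p³ if and only if G contains no abelian subgroup of index p and |G:Z(G)| = p³. -/
open Pointwise

/-!
Write `C = C_G(H)`. If `H ⊔ C = G`, then `H ⊓ C` commutes with both `H` and `C`, hence is central,
and `|G : Z(G)| ≤ |G : H ⊓ C| ≤ m(G,H)`. If `H ⊔ C < G` and `m(G,H) ≤ p³`, then one of `H`, `C`
has index `p`, is therefore maximal and contains the other one, which is central in it of index
dividing `p`; so the maximal one is an abelian subgroup of index `p`. On the other hand, an abelian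
subgroup `A` lies in its centralizer, so `m(G,A) ≤ |G:A|²`, and `μ(G) ≤ m(G,Z(G)) = |G:Z(G)|`.
-/

open Subgroup

section General

variable {G : Type*} [Group G]

theorem cdMu_le_cdMeasure (H : Subgroup G) : cdMu G ≤ cdMeasure H :=
  Nat.sInf_le ⟨H, rfl⟩

theorem exists_cdMeasure_eq_cdMu (G : Type*) [Group G] :
    ∃ H : Subgroup G, cdMeasure H = cdMu G :=
  Nat.sInf_mem (s := {n | ∃ H : Subgroup G, cdMeasure H = n}) ⟨_, ⊥, rfl⟩

theorem cdMeasure_center : cdMeasure (center G) = (center G).index := by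
  rw [cdMeasure, centralizer_eq_top_iff_subset.mpr subset_rfl, index_top, mul_one]

theorem cdMeasure_le_index_sq (A : Subgroup G) [A.FiniteIndex] [IsMulCommutative A] :
    cdMeasure A ≤ A.index ^ 2 := by
  rw [cdMeasure, sq]
  exact Nat.mul_le_mul_left _ (index_antitone (le_centralizer A))

theorem inf_centralizer_le_center {H : Subgroup G} (h : H ⊔ centralizer (H : Set G) = ⊤) :
    H ⊓ centralizer (H : Set G) ≤ center G := by
  have hle : H ⊔ centralizer (H : Set G) ≤
      centralizer ((H ⊓ centralizer (H : Set G) : Subgroup G) : Set G) :=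
    sup_le (le_centralizer_iff.mp inf_le_right) (centralizer_le (fun _ hx => hx.1))
  rw [h, top_le_iff, centralizer_eq_top_iff_subset] at hle
  exact hle

theorem index_center_le_cdMeasure_of_sup_eq_top [Finite G] {H : Subgroup G}
    (h : H ⊔ centralizer (H : Set G) = ⊤) : (center G).index ≤ cdMeasure H :=
  (index_antitone (inf_centralizer_le_center h)).trans index_inf_le

theorem le_of_sup_ne_top_of_index_eq_prime [Finite G] {p : ℕ} (hp : p.Prime) {M K : Subgroup G}
    (hM : M.index = p) (hMK : M ⊔ K ≠ ⊤) : K ≤ M := by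
  by_contra hKM
  have hlt : M < M ⊔ K := left_lt_sup.mpr hKM
  rcases (Nat.dvd_prime hp).mp (hM ▸ index_dvd_of_le hlt.le) with h | h
  · exact hMK (index_eq_one.mp h)
  · exact (index_strictAnti hlt).ne (h.trans hM.symm)

theorem isMulCommutative_of_index_center_dvd_prime {p : ℕ} [Fact p.Prime]
    (h : (center G).index ∣ p) : IsMulCommutative G :=
  have : IsCyclic (G ⧸ center G) := isCyclic_of_card_dvd_prime h
  isMulCommutative_of_isCyclic_quotient_center_self G

theorem isMulCommutative_of_le_centralizer_of_index_dvd_prime_sq {p : ℕ} (hp : p.Prime)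
    {A M : Subgroup G} (hAM : A ≤ M) (hMA : M ≤ centralizer (A : Set G)) (hM : M.index = p)
    (hA : A.index ∣ p ^ 2) : IsMulCommutative M := by
  have : Fact p.Prime := ⟨hp⟩
  have hrel : A.relIndex M ∣ p := by
    rw [← relIndex_mul_index hAM, hM, sq] at hA
    exact Nat.dvd_of_mul_dvd_mul_right hp.pos hA
  have hcenter : A.subgroupOf M ≤ center M := fun a ha ↦
    mem_center_iff.mpr fun m ↦ Subtype.ext (hMA m.2 a ha).symm
  exact isMulCommutative_of_index_center_dvd_prime ((index_dvd_of_le hcenter).trans hrel)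

end General

section PGroup

variable {G : Type*} [Group G] [Finite G] {p : ℕ}

theorem exists_isMulCommutative_index_eq_of_sup_centralizer_ne_top (hp : p.Prime)
    (hG : IsPGroup p G) {H : Subgroup G} (hm : cdMeasure H ≤ p ^ 3)
    (hsup : H ⊔ centralizer (H : Set G) ≠ ⊤) :
    ∃ A : Subgroup G, IsMulCommutative A ∧ A.index = p := by
  have : Fact p.Prime := ⟨hp⟩
  obtain ⟨a, ha⟩ := hG.index H
  obtain ⟨b, hb⟩ := hG.index (centralizer (H : Set G))
  have hab : a + b ≤ 3 := by
    rw [cdMeasure, ha, hb, ← pow_add] at hm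
    exact (Nat.pow_le_pow_iff_right hp.one_lt).mp hm
  have ha0 : a ≠ 0 := by
    rintro rfl
    exact hsup (by rw [index_eq_one.mp ha, top_sup_eq])
  have hb0 : b ≠ 0 := by
    rintro rfl
    exact hsup (by rw [index_eq_one.mp hb, sup_top_eq])
  obtain rfl | rfl : a = 1 ∨ b = 1 := by omega
  · rw [pow_one] at ha
    have hCH := le_of_sup_ne_top_of_index_eq_prime hp ha hsup
    exact ⟨H, isMulCommutative_of_le_centralizer_of_index_dvd_prime_sq hp hCH
      (le_centralizer_iff.mp le_rfl) ha (hb ▸ pow_dvd_pow p (by omega)), ha⟩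
  · rw [pow_one] at hb
    have hHC := le_of_sup_ne_top_of_index_eq_prime hp hb (sup_comm H _ ▸ hsup)
    exact ⟨_, isMulCommutative_of_le_centralizer_of_index_dvd_prime_sq hp hHC le_rfl hb
      (ha ▸ pow_dvd_pow p (by omega)), hb⟩

theorem index_center_le_cdMeasure (hp : p.Prime) (hG : IsPGroup p G)
    (hA : ¬ ∃ A : Subgroup G, IsMulCommutative A ∧ A.index = p) {H : Subgroup G}
    (hm : cdMeasure H ≤ p ^ 3) : (center G).index ≤ cdMeasure H := by
  by_cases hsup : H ⊔ centralizer (H : Set G) = ⊤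
  · exact index_center_le_cdMeasure_of_sup_eq_top hsup
  · exact absurd (exists_isMulCommutative_index_eq_of_sup_centralizer_ne_top hp hG hm hsup) hA

end PGroup

theorem stmt_15_general {G : Type*} [Group G] [Finite G] (p : ℕ) (hp : p.Prime)
    (hpG : IsPGroup p G) :
    cdMu G = p ^ 3 ↔
      (¬ ∃ A : Subgroup G, IsMulCommutative A ∧ A.index = p) ∧
        (Subgroup.center G).index = p ^ 3 := by
  obtain ⟨H, hH⟩ := exists_cdMeasure_eq_cdMu G
  have hμZ : cdMu G ≤ (center G).index := cdMeasure_center (G := G) ▸ cdMu_le_cdMeasure _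
  constructor
  · intro hμ
    have hnoA : ¬ ∃ A : Subgroup G, IsMulCommutative A ∧ A.index = p := by
      rintro ⟨A, hA, hAp⟩
      have h := (cdMu_le_cdMeasure A).trans (cdMeasure_le_index_sq A)
      rw [hμ, hAp] at h
      exact (Nat.pow_lt_pow_right hp.one_lt (by norm_num)).not_ge h
    refine ⟨hnoA, le_antisymm ?_ (hμ ▸ hμZ)⟩
    rw [← hμ, ← hH]
    exact index_center_le_cdMeasure hp hpG hnoA (hH.trans hμ).le
  · rintro ⟨hnoA, hZ⟩
    have hμ : cdMu G ≤ p ^ 3 := hZ ▸ hμZ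
    refine le_antisymm hμ ?_
    rw [← hZ, ← hH]
    exact index_center_le_cdMeasure hp hpG hnoA (hH ▸ hμ)

theorem stmt_15 {G : Type*} [Group G] [Finite G] (p : ℕ) (hp : p.Prime)
    (hpG : IsPGroup p G) (hnonab : ¬ ∀ a b : G, a * b = b * a) :
    cdMu G = p ^ 3 ↔
      (¬ ∃ A : Subgroup G, IsMulCommutative A ∧ A.index = p) ∧
        (Subgroup.center G).index = p ^ 3 :=
  stmt_15_general p hp hpG
end
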